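/- arXiv:2302.01868 — 2 statements merged into one kernel-verified Lean document; each statement's English description precedes it below -/
import Mathlib

section
/- Let X be a locally finite poset and K a field. Define A^(0) = A = I(X,K) and A^(n+1) = [A^(n), A^(n)]·A. Then for every n > 0, A^(n) ⊆ Z_{2^{n-1}}, where Z_k = {α ∈ I(X,K) : α(x,y) = 0 whenever l(x,y) ≤ k - 1}. -/
open IncidenceAlgebra

variable {K : Type*} [Field K] {X : Type*} [PartialOrder X] [LocallyFiniteOrder X] [DecidableEq X]

/-- The length `l(x,y)` of the interval `[x,y]`: the supremum of `|C| - 1` over finite chains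
`C ⊆ [x,y]`. -/
noncomputable def intervalLength (x y : X) : ℕ∞ := (Set.Icc x y).chainHeight (· < ·) - 1

/-- `Z_k`: the set of elements `α` of the incidence algebra with `α x y = 0` whenever
`l(x,y) ≤ k - 1`. -/
def zSet (K : Type*) [Field K] (X : Type*) [PartialOrder X] [LocallyFiniteOrder X]
    [DecidableEq X] (k : ℕ) : Set (IncidenceAlgebra K X) :=
  {f | ∀ x y : X, x ≤ y → intervalLength x y ≤ (k : ℕ∞) - 1 → f x y = 0}


def zMod (K : Type*) [Field K] (X : Type*) [PartialOrder X] [LocallyFiniteOrder X]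
    [DecidableEq X] (k : ℕ) : Submodule K (IncidenceAlgebra K X) where
  carrier := zSet K X k
  add_mem' := fun hf hg x y hxy hl => by
    simp [IncidenceAlgebra.add_apply, hf x y hxy hl, hg x y hxy hl]
  zero_mem' := fun x y _ _ => rfl
  smul_mem' := fun c f hf x y hxy hl => by
    simp [IncidenceAlgebra.constSMul_apply, hf x y hxy hl]

lemma chainHeight_Icc_add {x z y : X} (hxz : x ≤ z) (hzy : z ≤ y) :
    (Set.Icc x z).chainHeight (· < ·) + (Set.Icc z y).chainHeight (· < ·)
      ≤ (Set.Icc x y).chainHeight (· < ·) + 1 := by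
  obtain ⟨t1, ht1s, ht1e, ht1c⟩ :=
    Set.exists_eq_chainHeight_of_finite (Set.Icc x z) (· < ·) (Set.finite_Icc x z)
  obtain ⟨t2, ht2s, ht2e, ht2c⟩ :=
    Set.exists_eq_chainHeight_of_finite (Set.Icc z y) (· < ·) (Set.finite_Icc z y)
  have hsub : t1 ∪ t2 ⊆ Set.Icc x y := by
    rintro a (ha | ha)
    · exact ⟨(ht1s ha).1, (ht1s ha).2.trans hzy⟩
    · exact ⟨hxz.trans (ht2s ha).1, (ht2s ha).2⟩
  have hc : IsChain (· < ·) (t1 ∪ t2) := by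
    have key : ∀ a ∈ t1, ∀ b ∈ t2, a ≠ b → a < b := fun a ha b hb hab =>
      lt_of_le_of_ne ((ht1s ha).2.trans (ht2s hb).1) hab
    rintro a (ha | ha) b (hb | hb) hab
    · exact ht1c ha hb hab
    · exact Or.inl (key a ha b hb hab)
    · exact Or.inr (key b hb a ha (Ne.symm hab))
    · exact ht2c ha hb hab
  have hinter : (t1 ∩ t2).encard ≤ 1 := by
    have : t1 ∩ t2 ⊆ {z} := fun a ha => le_antisymm (ht1s ha.1).2 (ht2s ha.2).1
    simpa using Set.encard_le_encard this
  calc _ = (t1 ∪ t2).encard + (t1 ∩ t2).encard := by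
        rw [← ht1e, ← ht2e, Set.encard_union_add_encard_inter]
    _ ≤ _ := add_le_add (Set.encard_le_chainHeight_of_isChain _ _ hsub hc) hinter

lemma mul_mem_zSet {j k : ℕ} (hj : 1 ≤ j) (hk : 1 ≤ k) {f g : IncidenceAlgebra K X}
    (hf : f ∈ zSet K X j) (hg : g ∈ zSet K X k) : f * g ∈ zSet K X (j + k) := by
  intro x y hxy hl
  rw [IncidenceAlgebra.mul_apply]
  refine Finset.sum_eq_zero fun z hz => ?_
  rw [Finset.mem_Icc] at hz
  have hch : (Set.Icc x y).chainHeight (· < ·) ≤ ((j + k : ℕ) : ℕ∞) := by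
    have h1 : (1 : ℕ∞) ≤ ((j + k : ℕ) : ℕ∞) := by exact_mod_cast Nat.le_add_right _ _ |>.trans' hj
    calc (Set.Icc x y).chainHeight (· < ·) ≤ ((j + k : ℕ) : ℕ∞) - 1 + 1 := tsub_le_iff_right.mp hl
      _ = _ := tsub_add_cancel_of_le h1
  have hadd := chainHeight_Icc_add hz.1 hz.2
  by_cases h1 : (Set.Icc x z).chainHeight (· < ·) ≤ (j : ℕ∞)
  · rw [hf x z hz.1 (tsub_le_tsub_right h1 1), zero_mul]
  · have h2 : (Set.Icc z y).chainHeight (· < ·) ≤ (k : ℕ∞) := by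
      by_contra h2
      have h1' : (j : ℕ∞) + 1 ≤ (Set.Icc x z).chainHeight (· < ·) :=
        (ENat.add_one_le_iff (by simp)).mpr (lt_of_not_ge h1)
      have h2' : (k : ℕ∞) + 1 ≤ (Set.Icc z y).chainHeight (· < ·) :=
        (ENat.add_one_le_iff (by simp)).mpr (lt_of_not_ge h2)
      have hfin : ((j : ℕ∞) + 1) + ((k : ℕ∞) + 1) ≤ ((j + k : ℕ) : ℕ∞) + 1 :=
        (add_le_add h1' h2').trans (hadd.trans (add_le_add hch le_rfl))
      have : (j : ℕ) + 1 + (k + 1) ≤ j + k + 1 := by exact_mod_cast hfin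
      omega
    rw [hg z y hz.2 (tsub_le_tsub_right h2 1), mul_zero]

lemma mul_right_mem_zSet {k : ℕ} {f : IncidenceAlgebra K X}
    (hf : f ∈ zSet K X k) (a : IncidenceAlgebra K X) : f * a ∈ zSet K X k := by
  intro x y hxy hl
  rw [IncidenceAlgebra.mul_apply]
  refine Finset.sum_eq_zero fun z hz => ?_
  rw [Finset.mem_Icc] at hz
  have : intervalLength x z ≤ intervalLength x y :=
    tsub_le_tsub_right (Set.chainHeight_mono (· < ·) _ _ (Set.Icc_subset_Icc_right hz.2)) 1
  rw [hf x z hz.1 (this.trans hl), zero_mul]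

lemma bracket_mem_zSet_one (u v : IncidenceAlgebra K X) :
    u * v - v * u ∈ zSet K X 1 := by
  intro x y hxy hl
  have hxy' : x = y := by
    by_contra h
    have hlt : x < y := lt_of_le_of_ne hxy h
    have h2 : (2 : ℕ∞) ≤ (Set.Icc x y).chainHeight (· < ·) := by
      rw [← Set.encard_pair h]
      refine Set.encard_le_chainHeight_of_isChain _ _ ?_ ?_
      · intro i hi
        rcases hi with rfl | rfl
        · exact ⟨le_refl _, hxy⟩
        · exact ⟨hxy, le_refl _⟩
      · intro a ha b hb hab
        rcases ha with rfl | rfl <;> rcases hb with rfl | rfl <;> simp_all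
    have h1 : (Set.Icc x y).chainHeight (· < ·) ≤ 1 := by
      simpa using tsub_le_iff_right.mp hl
    exact absurd (h2.trans h1) (by norm_num)
  subst hxy'
  simp [IncidenceAlgebra.sub_apply, IncidenceAlgebra.mul_apply, mul_comm]

/-- The span of Lie brackets `[u,v] = u*v - v*u`, `u ∈ U`, `v ∈ V`. -/
def lieBracketSpan (U V : Submodule K (IncidenceAlgebra K X)) :
    Submodule K (IncidenceAlgebra K X) :=
  Submodule.span K {z | ∃ u ∈ U, ∃ v ∈ V, z = u * v - v * u}

/-- The span of products `u * a`, `u ∈ U`, `a` arbitrary. -/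
def mulASpan (U : Submodule K (IncidenceAlgebra K X)) : Submodule K (IncidenceAlgebra K X) :=
  Submodule.span K {z | ∃ u ∈ U, ∃ a : IncidenceAlgebra K X, z = u * a}

/-- `J = Z_1`, the ideal of elements vanishing on the diagonal. -/
def jRad (K : Type*) [Field K] (X : Type*) [PartialOrder X] [LocallyFiniteOrder X]
    [DecidableEq X] : Submodule K (IncidenceAlgebra K X) where
  carrier := {f | ∀ x : X, f x x = 0}
  add_mem' := fun hf hg x => by simp [IncidenceAlgebra.add_apply, hf x, hg x]
  zero_mem' := fun _ => rfl
  smul_mem' := fun c f hf x => by simp [IncidenceAlgebra.constSMul_apply, hf x]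

/-- The lower central series `γ₁ = I`, `γ_{n+1} = [γ_n, I]` (indexed from `0`, so that
`lowerCentralSeriesSub I n` is `γ_{n+1}`). -/
def lowerCentralSeriesSub (I : Submodule K (IncidenceAlgebra K X)) :
    ℕ → Submodule K (IncidenceAlgebra K X)
  | 0 => I
  | n + 1 => lieBracketSpan (lowerCentralSeriesSub I n) I

/-- The strong Lie derived series `I⁽⁰⁾ = I`, `I⁽ⁿ⁺¹⁾ = [I⁽ⁿ⁾, I⁽ⁿ⁾]·A`. -/
def strongDerivedSeriesSub (I : Submodule K (IncidenceAlgebra K X)) :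
    ℕ → Submodule K (IncidenceAlgebra K X)
  | 0 => I
  | n + 1 =>
      mulASpan (lieBracketSpan (strongDerivedSeriesSub I n) (strongDerivedSeriesSub I n))


lemma lieBracketSpan_le_zMod {U : Submodule K (IncidenceAlgebra K X)} {m : ℕ} (hm : 1 ≤ m)
    (hU : U ≤ zMod K X m) : lieBracketSpan U U ≤ zMod K X (m + m) := by
  rw [lieBracketSpan, Submodule.span_le]
  rintro _ ⟨u, hu, v, hv, rfl⟩
  exact sub_mem (mul_mem_zSet hm hm (hU hu) (hU hv)) (mul_mem_zSet hm hm (hU hv) (hU hu))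

lemma mulASpan_le_zMod {U : Submodule K (IncidenceAlgebra K X)} {m : ℕ}
    (hU : U ≤ zMod K X m) : mulASpan U ≤ zMod K X m := by
  rw [mulASpan, Submodule.span_le]
  rintro _ ⟨u, hu, a, rfl⟩
  exact mul_right_mem_zSet (hU hu) a

lemma strongDerivedSeries_le_zMod (n : ℕ) :
    strongDerivedSeriesSub (⊤ : Submodule K (IncidenceAlgebra K X)) (n + 1)
      ≤ zMod K X (2 ^ n) := by
  induction n with
  | zero =>
      refine mulASpan_le_zMod ?_
      rw [lieBracketSpan, Submodule.span_le]
      rintro _ ⟨u, -, v, -, rfl⟩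
      exact bracket_mem_zSet_one u v
  | succ n ih =>
      have h := lieBracketSpan_le_zMod (Nat.one_le_two_pow) ih
      have h2 : 2 ^ n + 2 ^ n = 2 ^ (n + 1) := by ring
      rw [h2] at h
      exact mulASpan_le_zMod h


/-- `A⁽ⁿ⁾ ⊆ Z_{2^{n-1}}` for every `n > 0`, where `A⁽⁰⁾ = A = I(X,K)` and
`A⁽ⁿ⁺¹⁾ = [A⁽ⁿ⁾, A⁽ⁿ⁾]·A`. -/
theorem strongDerivedSeries_top_subset_zSet (n : ℕ) (hn : 0 < n) :
    (strongDerivedSeriesSub (⊤ : Submodule K (IncidenceAlgebra K X)) n :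
      Set (IncidenceAlgebra K X)) ⊆ zSet K X (2 ^ (n - 1)) := by
  obtain ⟨m, rfl⟩ : ∃ m, n = m + 1 := ⟨n - 1, by omega⟩
  intro f hf
  exact strongDerivedSeries_le_zMod m hf
end

section
/- Let X be a locally finite poset and K a field. Then the incidence algebra I(X,K) is Lie solvable if and only if X is bounded (has finite length). -/
open IncidenceAlgebra

variable {K : Type*} [Field K] {X : Type*} [PartialOrder X] [LocallyFiniteOrder X] [DecidableEq X]

/-- The Lie derived series `A⁽⁰⁾ = A`, `A⁽ⁿ⁺¹⁾ = [A⁽ⁿ⁾, A⁽ⁿ⁾]` of the incidence algebra. -/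
def lieDerivedSeriesSub (K : Type*) [Field K] (X : Type*) [PartialOrder X]
    [LocallyFiniteOrder X] [DecidableEq X] : ℕ → Submodule K (IncidenceAlgebra K X)
  | 0 => ⊤
  | n + 1 => lieBracketSpan (lieDerivedSeriesSub K X n) (lieDerivedSeriesSub K X n)

section esingleSec
open scoped Classical

/-- The "matrix unit" at `(a, b)`. -/
noncomputable def esingle (K : Type*) [Field K] (a b : X) : IncidenceAlgebra K X :=
  ⟨fun x y => if x = a ∧ y = b ∧ a ≤ b then 1 else 0, by
    intro x y hxy
    rw [if_neg]
    rintro ⟨rfl, rfl, h⟩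
    exact hxy h⟩

lemma esingle_apply (a b x y : X) :
    esingle K a b x y = if x = a ∧ y = b ∧ a ≤ b then 1 else 0 := by
  rfl

lemma esingle_self_apply {a b : X} (hab : a ≤ b) : esingle K a b a b = 1 := by
  rw [esingle_apply, if_pos ⟨rfl, rfl, hab⟩]

lemma esingle_mul_esingle {a b c : X} (hab : a ≤ b) (hbc : b ≤ c) :
    esingle K a b * esingle K b c = esingle K a c := by
  ext x y hxy
  rw [mul_apply, Finset.sum_eq_single b]
  · simp only [esingle_apply, hab, hbc, hab.trans hbc, and_true]
    by_cases h1 : x = a <;> by_cases h2 : y = c <;> simp [h1, h2]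
  · intro z hz hzb
    rw [esingle_apply b c z y, if_neg (by tauto), mul_zero]
  · intro hb
    simp only [esingle_apply, hab, hbc, and_true]
    by_cases h1 : x = a <;> by_cases h2 : y = c
    · exact absurd (Finset.mem_Icc.2 ⟨h1 ▸ hab, h2 ▸ hbc⟩) hb
    · simp [h2]
    · simp [h1]
    · simp [h1]

lemma esingle_mul_esingle_eq_zero {a b b' c : X} (hac : a ≠ c) :
    esingle K b c * esingle K a b' = 0 := by
  ext x y hxy
  rw [mul_apply, IncidenceAlgebra.zero_apply]
  refine Finset.sum_eq_zero fun z hz => ?_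
  rw [esingle_apply, esingle_apply]
  split_ifs with h1 h2
  · exact absurd (h2.1.symm.trans h1.2.1) hac
  · simp
  · simp
  · simp

end esingleSec

lemma lt_of_chain {f : ℕ → X} {m : ℕ} (hf : ∀ i < m, f i < f (i + 1)) :
    ∀ b, b ≤ m → ∀ a, a < b → f a < f b := by
  intro b
  induction b with
  | zero => omega
  | succ k ih =>
    intro hk a ha
    rcases Nat.lt_or_ge a k with h | h
    · exact (ih (by omega) a h).trans (hf k (by omega))
    · have hak : a = k := by omega
      subst hak
      exact hf a (by omega)

lemma esingle_mem_derived (n : ℕ) (f : ℕ → X) (hf : ∀ i < 2 ^ n, f i < f (i + 1)) :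
    esingle K (f 0) (f (2 ^ n)) ∈ lieDerivedSeriesSub K X n := by
  induction n generalizing f with
  | zero => exact Submodule.mem_top
  | succ n ih =>
    have key : 2 ^ (n + 1) = 2 ^ n + 2 ^ n := by rw [pow_succ]; ring
    have hmono := lt_of_chain hf
    have hL : esingle K (f 0) (f (2 ^ n)) ∈ lieDerivedSeriesSub K X n :=
      ih f (fun i hi => hf i (by omega))
    have hR : esingle K (f (2 ^ n)) (f (2 ^ n + 2 ^ n)) ∈ lieDerivedSeriesSub K X n := by
      have := ih (fun i => f (i + 2 ^ n)) (fun i hi => by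
        simpa [show i + 1 + 2 ^ n = i + 2 ^ n + 1 by omega] using hf (i + 2 ^ n) (by omega))
      simpa using this
    have hpos : 0 < 2 ^ n := Nat.pow_pos (by norm_num)
    have h01 : f 0 < f (2 ^ n) := hmono (2 ^ n) (by omega) 0 hpos
    have h12 : f (2 ^ n) < f (2 ^ n + 2 ^ n) := hmono (2 ^ n + 2 ^ n) (by omega) (2 ^ n) (by omega)
    show esingle K (f 0) (f (2 ^ (n + 1))) ∈
      lieBracketSpan (lieDerivedSeriesSub K X n) (lieDerivedSeriesSub K X n)
    have heq : esingle K (f 0) (f (2 ^ (n + 1))) =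
        esingle K (f 0) (f (2 ^ n)) * esingle K (f (2 ^ n)) (f (2 ^ n + 2 ^ n)) -
        esingle K (f (2 ^ n)) (f (2 ^ n + 2 ^ n)) * esingle K (f 0) (f (2 ^ n)) := by
      rw [key, esingle_mul_esingle h01.le h12.le,
        esingle_mul_esingle_eq_zero (h01.trans h12).ne, sub_zero]
    rw [heq]
    exact Submodule.subset_span ⟨_, hL, _, hR, rfl⟩

lemma exists_seq_of_chain (k : ℕ) : ∀ t : Set X, IsChain (· < ·) t → t.encard = (k + 1 : ℕ) →
    ∃ f : ℕ → X, (∀ i ≤ k, f i ∈ t) ∧ ∀ i < k, f i < f (i + 1) := by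
  induction k with
  | zero =>
    intro t _ ht
    obtain ⟨x, hx⟩ := Set.encard_eq_one.1 (by simpa using ht)
    exact ⟨fun _ => x, fun i _ => by simp [hx], fun i hi => absurd hi (Nat.not_lt_zero _)⟩
  | succ k ih =>
    intro t hc ht
    have hfin : t.Finite := Set.finite_of_encard_eq_coe ht
    have hne : t.Nonempty := by
      rw [← Set.encard_pos, ht]; exact_mod_cast Nat.succ_pos _
    obtain ⟨m, hm⟩ := hfin.exists_maximal hne
    have hmt : m ∈ t := hm.prop
    have ht' : (t \ {m}).encard = (k + 1 : ℕ) := by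
      rw [Set.encard_diff_singleton_of_mem hmt, ht]
      norm_cast
    obtain ⟨g, hg1, hg2⟩ := ih _ (hc.mono Set.diff_subset) ht'
    refine ⟨fun i => if i = k + 1 then m else g i, ?_, ?_⟩
    · intro i hi
      by_cases h : i = k + 1
      · simp [h, hmt]
      · simp only [h, if_false]
        exact (hg1 i (by omega)).1
    · intro i hi
      by_cases h : i = k
      · subst h
        simp only [if_neg (show i ≠ i + 1 by omega), if_pos rfl]
        have hgm := hg1 i le_rfl
        rcases hc hgm.1 hmt (by simpa using hgm.2) with h1 | h1
        · exact h1
        · exact (lt_irrefl _ (h1.trans_le (hm.2 hgm.1 h1.le))).elim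
      · simp only [if_neg (show i ≠ k + 1 by omega), if_neg (show i + 1 ≠ k + 1 by omega)]
        exact hg2 i (by omega)

lemma derived_ne_bot_of_unbounded (h : (Set.univ : Set X).chainHeight (· < ·) = ⊤) (n : ℕ) :
    lieDerivedSeriesSub K X n ≠ ⊥ := by
  obtain ⟨t, -, ht, hc⟩ := (Set.chainHeight_eq_top_iff _ _).1 h (2 ^ n + 1)
  obtain ⟨f, -, hf⟩ := exists_seq_of_chain (2 ^ n) t hc ht
  have hm := esingle_mem_derived (K := K) n f hf
  intro hbot
  rw [hbot, Submodule.mem_bot] at hm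
  have h01 : f 0 ≤ f (2 ^ n) :=
    (lt_of_chain hf (2 ^ n) le_rfl 0 (Nat.pow_pos (by norm_num))).le
  have hone := esingle_self_apply (K := K) h01
  rw [hm] at hone
  simp [IncidenceAlgebra.zero_apply] at hone

/-- The submodule of elements vanishing on all intervals of chain height at most `k`. -/
def wSub (K : Type*) [Field K] (X : Type*) [PartialOrder X] [LocallyFiniteOrder X]
    [DecidableEq X] (k : ℕ) : Submodule K (IncidenceAlgebra K X) where
  carrier := {f | ∀ x y : X, (Set.Icc x y).chainHeight (· < ·) ≤ (k : ℕ∞) → f x y = 0}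
  add_mem' := fun hf hg x y h => by rw [IncidenceAlgebra.add_apply, hf x y h, hg x y h, add_zero]
  zero_mem' := fun x y h => rfl
  smul_mem' := fun c f hf x y h => by rw [constSMul_apply, hf x y h, smul_zero]

lemma mem_wSub {k : ℕ} {f : IncidenceAlgebra K X} :
    f ∈ wSub K X k ↔ ∀ x y : X, (Set.Icc x y).chainHeight (· < ·) ≤ (k : ℕ∞) → f x y = 0 :=
  Iff.rfl

lemma mul_mem_wSub {a b : ℕ} {f g : IncidenceAlgebra K X}
    (hf : f ∈ wSub K X a) (hg : g ∈ wSub K X b) : f * g ∈ wSub K X (a + b) := by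
  rw [mem_wSub]
  intro x y h
  rw [mul_apply]
  refine Finset.sum_eq_zero fun z hz => ?_
  rw [Finset.mem_Icc] at hz
  by_cases h1 : (Set.Icc x z).chainHeight (· < ·) ≤ (a : ℕ∞)
  · rw [hf x z h1, zero_mul]
  · have h1' : (a : ℕ∞) + 1 ≤ (Set.Icc x z).chainHeight (· < ·) :=
      (ENat.add_one_le_iff (by simp)).2 (not_le.1 h1)
    have hsplit := chainHeight_Icc_add hz.1 hz.2
    have hb : (Set.Icc z y).chainHeight (· < ·) ≤ (b : ℕ∞) := by
      have hchain : (a : ℕ∞) + 1 + (Set.Icc z y).chainHeight (· < ·) ≤ (a : ℕ∞) + 1 + (b : ℕ∞) := by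
        calc (a : ℕ∞) + 1 + (Set.Icc z y).chainHeight (· < ·)
            ≤ (Set.Icc x z).chainHeight (· < ·) + (Set.Icc z y).chainHeight (· < ·) := add_le_add h1' le_rfl
          _ ≤ (Set.Icc x y).chainHeight (· < ·) + 1 := hsplit
          _ ≤ ((a : ℕ∞) + (b : ℕ∞)) + 1 := by
              refine add_le_add (h.trans_eq ?_) le_rfl
              push_cast; rfl
          _ = (a : ℕ∞) + 1 + (b : ℕ∞) := by ring
      exact (WithTop.add_le_add_iff_left (by exact_mod_cast ENat.coe_ne_top (a + 1) : (a : ℕ∞) + 1 ≠ ⊤)).1 hchain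
    rw [hg z y hb, mul_zero]

lemma lieBracketSpan_le_wSub {a b : ℕ} {U V : Submodule K (IncidenceAlgebra K X)}
    (hU : U ≤ wSub K X a) (hV : V ≤ wSub K X b) :
    lieBracketSpan U V ≤ wSub K X (a + b) := by
  rw [lieBracketSpan, Submodule.span_le]
  rintro z ⟨u, hu, v, hv, rfl⟩
  simp only [SetLike.mem_coe]
  refine sub_mem (mul_mem_wSub (hU hu) (hV hv)) ?_
  rw [Nat.add_comm]
  exact mul_mem_wSub (hV hv) (hU hu)

lemma lieBracketSpan_le_wSub_one (U V : Submodule K (IncidenceAlgebra K X)) :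
    lieBracketSpan U V ≤ wSub K X 1 := by
  rw [lieBracketSpan, Submodule.span_le]
  rintro z ⟨u, -, v, -, rfl⟩
  simp only [SetLike.mem_coe, mem_wSub]
  intro x y h
  by_cases hxy : x ≤ y
  · have hxy' : x = y := by
      by_contra hne
      have h2 : ((2 : ℕ) : ℕ∞) ≤ (Set.Icc x y).chainHeight (· < ·) := by
        have hlt := lt_of_le_of_ne hxy hne
        have hc : IsChain (· < ·) ({x, y} : Set X) := by
          intro p hp q hq hpq
          simp only [Set.mem_insert_iff, Set.mem_singleton_iff] at hp hq
          rcases hp with rfl | rfl <;> rcases hq with rfl | rfl <;> simp_all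
        have hs : ({x, y} : Set X) ⊆ Set.Icc x y := by
          intro i hi
          simp only [Set.mem_insert_iff, Set.mem_singleton_iff] at hi
          rcases hi with rfl | rfl
          · exact Set.mem_Icc.2 ⟨le_refl i, hxy⟩
          · exact Set.mem_Icc.2 ⟨hxy, le_refl i⟩
        have := Set.encard_le_chainHeight_of_isChain (Set.Icc x y) _ hs hc
        rw [Set.encard_pair hne] at this
        exact_mod_cast this
      have := h2.trans h
      norm_num at this
    subst hxy'
    rw [IncidenceAlgebra.sub_apply, mul_apply, mul_apply, Finset.Icc_self, Finset.sum_singleton,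
      Finset.sum_singleton, mul_comm, sub_self]
  · exact apply_eq_zero_of_not_le hxy _

lemma derived_le_wSub (n : ℕ) : lieDerivedSeriesSub K X (n + 1) ≤ wSub K X (2 ^ n) := by
  induction n with
  | zero => exact lieBracketSpan_le_wSub_one _ _
  | succ n ih =>
    have h := lieBracketSpan_le_wSub ih ih
    rwa [show 2 ^ n + 2 ^ n = 2 ^ (n + 1) by rw [pow_succ]; ring] at h

/-- `I(X,K)` is Lie solvable iff `X` is bounded. -/
theorem lieSolvable_iff_bounded :
    (∃ n, lieDerivedSeriesSub K X n = ⊥) ↔ (Set.univ : Set X).chainHeight (· < ·) ≠ ⊤ := by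
  constructor
  · rintro ⟨n, hn⟩ htop
    exact derived_ne_bot_of_unbounded htop n hn
  · intro h
    lift (Set.univ : Set X).chainHeight (· < ·) to ℕ using h with N hN
    refine ⟨N + 1, ?_⟩
    rw [eq_bot_iff]
    refine le_trans (derived_le_wSub N) ?_
    intro f hf
    rw [Submodule.mem_bot]
    ext x y hxy
    rw [IncidenceAlgebra.zero_apply]
    refine hf x y ?_
    calc (Set.Icc x y).chainHeight (· < ·)
        ≤ (Set.univ : Set X).chainHeight (· < ·) := Set.chainHeight_mono _ _ _ (Set.subset_univ _)
      _ = (N : ℕ∞) := hN.symm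
      _ ≤ ((2 ^ N : ℕ) : ℕ∞) := by exact_mod_cast (Nat.lt_two_pow_self (n := N)).le
end
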